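/- For every n ≥ 2: for each odd i with 1 ≤ i < n, the projection S_n[x_i, x_{i+1}] equals x_{i+1} x_i² x_{i+1}; for each even i with 2 ≤ i < n, S_n[x_i, x_{i+1}] equals x_i x_{i+1}² x_i; and for each 1 ≤ i < j ≤ n with j − i ≥ 2, S_n[x_i, x_j] equals x_j x_i x_j x_i. -/

import Mathlib

/-! Adding the letter `k + 1` to `S k` never changes a projection onto two letters `i < j ≤ k`,
so `S n[xᵢ, xⱼ]` is already fixed in `S j`. Each part of `S (j - 1)` contains every letter
`1, …, j - 1` exactly once, and `S j` puts `xⱼ` in front of one part and right after the first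
letter of the other, which is `x_{j-1}`. Hence each part of `S j` projects to `xⱼ xᵢ`, except
that for `i = j - 1` the part into which `xⱼ` was inserted projects to `xᵢ xⱼ`; which part that
is depends on the parity of `i`. -/

/-- Insert `x` right after the first letter of a list. -/
def insert2 (x : ℕ) : List ℕ → List ℕ
  | [] => [x]
  | a :: t => a :: x :: t

/-- The two linear parts of the double-linear word `S n`:
`S 1 = x₁²`; for odd `k`, `x_{k+1}` is prepended to the first part and inserted after
the first letter of the second part; for even `k`, vice versa. -/
def sPair : ℕ → List ℕ × List ℕ
  | 0 => ([], [])
  | 1 => ([1], [1])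
  | (k+2) =>
    let p := sPair (k+1)
    if (k+1) % 2 = 1 then ((k+2) :: p.1, insert2 (k+2) p.2)
    else (insert2 (k+2) p.1, (k+2) :: p.2)

/-- The word `S n`, e.g. `S 8 = (x₈x₆x₇x₄x₅x₂x₃x₁)(x₇x₈x₅x₆x₃x₄x₁x₂)`. -/
def sW (n : ℕ) : List ℕ := (sPair n).1 ++ (sPair n).2

/-- Projection of a word to the two variables `i`, `j` (deleting all other letters). -/
def proj2 (u : List ℕ) (i j : ℕ) : List ℕ := u.filter (fun a => a == i || a == j)

section Proj2

variable {l : List ℕ} {i j : ℕ}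

lemma proj2_append (l₁ l₂ : List ℕ) (i j : ℕ) :
    proj2 (l₁ ++ l₂) i j = proj2 l₁ i j ++ proj2 l₂ i j :=
  List.filter_append ..

lemma proj2_cons_of_ne {a : ℕ} (hi : a ≠ i) (hj : a ≠ j) :
    proj2 (a :: l) i j = proj2 l i j := by
  simp [proj2, hi, hj]

lemma proj2_cons_right : proj2 (j :: l) i j = j :: proj2 l i j := by
  simp [proj2]

lemma proj2_insert2_of_ne {a : ℕ} (hi : a ≠ i) (hj : a ≠ j) :
    proj2 (insert2 a l) i j = proj2 l i j := by
  cases l with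
  | nil => simp [insert2, proj2, hi, hj]
  | cons b t => simp [insert2, proj2, List.filter_cons, hi, hj]

lemma proj2_eq_singleton (hl : l.Nodup) (hi : i ∈ l) (hj : j ∉ l) : proj2 l i j = [i] := by
  have hfilter : proj2 l i j = l.filter (· == i) :=
    List.filter_congr fun a ha => by simp [ne_of_mem_of_not_mem ha hj]
  rw [hfilter, List.filter_beq, List.count_eq_one_of_mem hl hi, List.replicate_one]

lemma proj2_insert2_cons {a : ℕ} {t : List ℕ} (hl : (a :: t).Nodup) (hi : i ∈ a :: t)
    (hj : j ∉ a :: t) :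
    proj2 (insert2 j (a :: t)) i j = if a = i then [i, j] else [j, i] := by
  have hja : a ≠ j := (List.ne_of_not_mem_cons hj).symm
  have hjt : j ∉ t := List.not_mem_of_not_mem_cons hj
  split_ifs with ha
  · subst ha
    have hnil : proj2 t a j = [] :=
      List.filter_eq_nil_iff.mpr fun b hb => by
        simp [ne_of_mem_of_not_mem hb (List.nodup_cons.mp hl).1, ne_of_mem_of_not_mem hb hjt]
    simp [insert2, proj2, ← hnil]
  · rw [insert2, proj2_cons_of_ne ha hja, proj2_cons_right, ← proj2_cons_of_ne ha hja,
      proj2_eq_singleton hl hi hj]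

end Proj2

lemma sPair_succ {m : ℕ} (hm : 1 ≤ m) :
    sPair (m + 1) = if m % 2 = 1 then ((m + 1) :: (sPair m).1, insert2 (m + 1) (sPair m).2)
      else (insert2 (m + 1) (sPair m).1, (m + 1) :: (sPair m).2) := by
  obtain ⟨k, rfl⟩ := Nat.exists_eq_add_of_le' hm
  rfl

lemma insert2_perm (a : ℕ) (l : List ℕ) : (insert2 a l).Perm (a :: l) := by
  cases l with
  | nil => rfl
  | cons b t => exact List.Perm.swap a b t

lemma cons_perm_range'_succ {m : ℕ} {l : List ℕ} (h : l.Perm (List.range' 1 m)) :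
    ((m + 1) :: l).Perm (List.range' 1 (m + 1)) := by
  rw [List.range'_concat, add_comm 1, one_mul]
  exact ((List.perm_append_singleton _ _).trans (h.symm.cons _)).symm

lemma sPair_perm_range' (m : ℕ) :
    (sPair m).1.Perm (List.range' 1 m) ∧ (sPair m).2.Perm (List.range' 1 m) := by
  induction m with
  | zero => simp [sPair]
  | succ m ih =>
    obtain rfl | hm := Nat.eq_zero_or_pos m
    · simp [sPair]
    obtain ⟨ih₁, ih₂⟩ := ih
    rw [sPair_succ hm]
    split_ifs
    · exact ⟨cons_perm_range'_succ ih₁, (insert2_perm _ _).trans (cons_perm_range'_succ ih₂)⟩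
    · exact ⟨(insert2_perm _ _).trans (cons_perm_range'_succ ih₁), cons_perm_range'_succ ih₂⟩

lemma sPair_fst_eq_cons_of_even {m : ℕ} (hm : m ≠ 0) (hm2 : m % 2 = 0) :
    ∃ t, (sPair m).1 = m :: t := by
  obtain ⟨k, rfl⟩ := Nat.exists_eq_add_of_le' (Nat.one_le_iff_ne_zero.mpr hm)
  obtain rfl | hk := Nat.eq_zero_or_pos k
  · omega
  rw [sPair_succ hk, if_pos (by omega)]
  exact ⟨_, rfl⟩

lemma sPair_snd_eq_cons_of_odd {m : ℕ} (hm2 : m % 2 = 1) :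
    ∃ t, (sPair m).2 = m :: t := by
  obtain ⟨k, rfl⟩ := Nat.exists_eq_add_of_le' (Nat.one_le_iff_ne_zero.mpr (by omega : m ≠ 0))
  obtain rfl | hk := Nat.eq_zero_or_pos k
  · exact ⟨[], rfl⟩
  rw [sPair_succ hk, if_neg (by omega)]
  exact ⟨_, rfl⟩

lemma proj2_sPair_self {i j : ℕ} (hi : 1 ≤ i) (hij : i < j) :
    proj2 (sPair j).1 i j = (if j = i + 1 ∧ i % 2 = 0 then [i, j] else [j, i]) ∧
    proj2 (sPair j).2 i j = (if j = i + 1 ∧ i % 2 = 1 then [i, j] else [j, i]) := by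
  obtain ⟨m, hm, rfl⟩ : ∃ m, 1 ≤ m ∧ j = m + 1 := ⟨j - 1, by omega, by omega⟩
  have hpart : ∀ P : List ℕ, P.Perm (List.range' 1 m) → P.Nodup ∧ i ∈ P ∧ m + 1 ∉ P :=
    fun P hP => ⟨hP.nodup_iff.mpr List.nodup_range',
      by rw [hP.mem_iff, List.mem_range'_1]; omega, by rw [hP.mem_iff, List.mem_range'_1]; omega⟩
  obtain ⟨hA, hiA, hjA⟩ := hpart _ (sPair_perm_range' m).1
  obtain ⟨hB, hiB, hjB⟩ := hpart _ (sPair_perm_range' m).2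
  rw [sPair_succ hm]
  by_cases hm2 : m % 2 = 1
  · obtain ⟨t, ht⟩ := sPair_snd_eq_cons_of_odd hm2
    rw [ht] at hB hiB hjB
    rw [if_pos hm2, ht]
    rw [proj2_cons_right, proj2_eq_singleton hA hiA hjA, proj2_insert2_cons hB hiB hjB]
    exact ⟨(if_neg (by omega)).symm, if_congr (by omega) rfl rfl⟩
  · obtain ⟨t, ht⟩ := sPair_fst_eq_cons_of_even (by omega) (by omega : m % 2 = 0)
    rw [ht] at hA hiA hjA
    rw [if_neg hm2, ht]
    rw [proj2_cons_right, proj2_eq_singleton hB hiB hjB, proj2_insert2_cons hA hiA hjA]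
    exact ⟨if_congr (by omega) rfl rfl, (if_neg (by omega)).symm⟩

lemma proj2_sPair_of_le {i j n : ℕ} (hj : 1 ≤ j) (hij : i ≤ j) (hjn : j ≤ n) :
    proj2 (sPair n).1 i j = proj2 (sPair j).1 i j ∧
    proj2 (sPair n).2 i j = proj2 (sPair j).2 i j := by
  induction n, hjn using Nat.le_induction with
  | base => exact ⟨rfl, rfl⟩
  | succ n hjn ih =>
    have hni : n + 1 ≠ i := by omega
    have hnj : n + 1 ≠ j := by omega
    rw [sPair_succ (hj.trans hjn)]
    split_ifs
    · rw [proj2_cons_of_ne hni hnj, proj2_insert2_of_ne hni hnj]; exact ih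
    · rw [proj2_insert2_of_ne hni hnj, proj2_cons_of_ne hni hnj]; exact ih

lemma proj2_sW {i j n : ℕ} (hi : 1 ≤ i) (hij : i < j) (hjn : j ≤ n) :
    proj2 (sW n) i j = (if j = i + 1 ∧ i % 2 = 0 then [i, j] else [j, i]) ++
      (if j = i + 1 ∧ i % 2 = 1 then [i, j] else [j, i]) := by
  obtain ⟨h₁, h₂⟩ := proj2_sPair_of_le (by omega) hij.le hjn
  obtain ⟨h₁', h₂'⟩ := proj2_sPair_self hi hij
  rw [sW, proj2_append, h₁, h₂, h₁', h₂']

theorem sW_projections_general (n : ℕ) :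
    (∀ i : ℕ, 1 ≤ i → i < n → Odd i → proj2 (sW n) i (i+1) = [i+1, i, i, i+1]) ∧
    (∀ i : ℕ, 2 ≤ i → i < n → Even i → proj2 (sW n) i (i+1) = [i, i+1, i+1, i]) ∧
    (∀ i j : ℕ, 1 ≤ i → i < j → j ≤ n → 2 ≤ j - i →
      proj2 (sW n) i j = [j, i, j, i]) := by
  refine ⟨fun i hi hin hodd => ?_, fun i hi hin heven => ?_, fun i j hi hij hjn hgap => ?_⟩
  · rw [proj2_sW hi (by omega) hin, Nat.odd_iff.mp hodd]
    simp
  · rw [proj2_sW (by omega) (by omega) hin, Nat.even_iff.mp heven]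
    simp
  · rw [proj2_sW hi hij hjn, if_neg (by omega), if_neg (by omega)]
    rfl

/-- For every `n ≥ 2`: for odd `1 ≤ i < n`, `S n[xᵢ,x_{i+1}] = x_{i+1} xᵢ² x_{i+1}`;
for even `2 ≤ i < n`, `S n[xᵢ,x_{i+1}] = xᵢ x_{i+1}² xᵢ`; and for `1 ≤ i < j ≤ n`
with `j - i ≥ 2`, `S n[xᵢ,xⱼ] = xⱼ xᵢ xⱼ xᵢ`. -/
theorem sW_projections (n : ℕ) (hn : 2 ≤ n) :
    (∀ i : ℕ, 1 ≤ i → i < n → Odd i → proj2 (sW n) i (i+1) = [i+1, i, i, i+1]) ∧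
    (∀ i : ℕ, 2 ≤ i → i < n → Even i → proj2 (sW n) i (i+1) = [i, i+1, i+1, i]) ∧
    (∀ i j : ℕ, 1 ≤ i → i < j → j ≤ n → 2 ≤ j - i →
      proj2 (sW n) i j = [j, i, j, i]) :=
  sW_projections_general n
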